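/- arXiv:1311.0382 — 2 statements merged into one kernel-verified Lean document; each statement's English description precedes it below -/
import Mathlib

section
/- For smooth scalar fields q, θ : ℝ³ → ℝ and a smooth divergence-free vector field u : ℝ³ → ℝ³, if both q and θ are materially conserved (∂ₜq + u·∇q = 0 and ∂ₜθ + u·∇θ = 0), then the vector field B = ∇q × ∇θ satisfies ∂ₜB − curl(u × B) = 0. -/
noncomputable section

/-- Space: ℝ³ as functions `Fin 3 → ℝ`. -/
abbrev V : Type := Fin 3 → ℝ

/-- Standard basis vector. -/
def e3 (i : Fin 3) : V := fun j => if j = i then 1 else 0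

/-- Partial derivative in direction `i`. -/
def pd (i : Fin 3) (f : V → ℝ) (x : V) : ℝ := fderiv ℝ f x (e3 i)

/-- Gradient. -/
def grad3 (f : V → ℝ) (x : V) : V := fun i => pd i f x

/-- Divergence. -/
def div3 (v : V → V) (x : V) : ℝ := ∑ i, pd i (fun y => v y i) x

/-- Curl. -/
def curl3 (v : V → V) (x : V) : V :=
  ![pd 1 (fun y => v y 2) x - pd 2 (fun y => v y 1) x,
    pd 2 (fun y => v y 0) x - pd 0 (fun y => v y 2) x,
    pd 0 (fun y => v y 1) x - pd 1 (fun y => v y 0) x]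

/-- Cross product on ℝ³. -/
def cross3 (a b : V) : V :=
  ![a 1 * b 2 - a 2 * b 1, a 2 * b 0 - a 0 * b 2, a 0 * b 1 - a 1 * b 0]

/-- Dot product. -/
def dot3 (a b : V) : ℝ := ∑ i, a i * b i

/-- Scalar Laplacian. -/
def lap3 (f : V → ℝ) (x : V) : ℝ := ∑ i, pd i (fun y => pd i f y) x

/-- Componentwise (vector) Laplacian. -/
def vlap3 (v : V → V) (x : V) : V := fun i => lap3 (fun y => v y i) x

/-- Directional derivative `(a·∇)b`. -/
def dirD (a b : V → V) (x : V) : V := fun i => dot3 (a x) (grad3 (fun y => b y i) x)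

/-- Time derivative of a time-dependent scalar field. -/
def tder (f : ℝ → V → ℝ) (t : ℝ) (x : V) : ℝ := deriv (fun s => f s x) t

/-- Time derivative of a time-dependent vector field. -/
def tderV (v : ℝ → V → V) (t : ℝ) (x : V) : V := fun i => deriv (fun s => v s x i) t

/-- Material derivative of a scalar: `∂ₜ f + u·∇f`. -/
def matD (u : ℝ → V → V) (f : ℝ → V → ℝ) (t : ℝ) (x : V) : ℝ :=
  tder f t x + dot3 (u t x) (grad3 (f t) x)

/-- Material derivative of a vector field, componentwise. -/
def matDV (u v : ℝ → V → V) (t : ℝ) (x : V) : V :=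
  fun i => tderV v t x i + dot3 (u t x) (grad3 (fun y => v t y i) x)

/-- The perpendicular gradient `∇⊥θ = (∂_y θ, −∂_x θ, 0)`. -/
def gradPerp (f : V → ℝ) (x : V) : V := ![pd 1 f x, -(pd 0 f x), 0]


abbrev EV : Type := ℝ × V

def dd (f : EV → ℝ) (p v : EV) : ℝ := fderiv ℝ f p v

lemma pd_slice (f : EV → ℝ) (hf : ContDiff ℝ (⊤ : ℕ∞) f) (t : ℝ) (x : V) (i : Fin 3) :
    pd i (fun y => f (t, y)) x = dd f (t, x) (0, e3 i) := by
  have h : HasFDerivAt (fun y : V => f (t, y))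
      ((fderiv ℝ f (t, x)).comp (ContinuousLinearMap.inr ℝ ℝ V)) x :=
    ((hf.differentiable (by simp)) (t, x)).hasFDerivAt.comp x (hasFDerivAt_prodMk_right t x)
  rw [pd, h.fderiv]
  rfl

lemma deriv_slice (f : EV → ℝ) (hf : ContDiff ℝ (⊤ : ℕ∞) f) (t : ℝ) (x : V) :
    deriv (fun s => f (s, x)) t = dd f (t, x) ((1 : ℝ), (0 : V)) := by
  have h : HasFDerivAt (fun s : ℝ => f (s, x))
      ((fderiv ℝ f (t, x)).comp (ContinuousLinearMap.inl ℝ ℝ V)) t :=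
    ((hf.differentiable (by simp)) (t, x)).hasFDerivAt.comp t (hasFDerivAt_prodMk_left t x)
  show fderiv ℝ (fun s : ℝ => f (s, x)) t 1 = _
  rw [h.fderiv]
  rfl

lemma contDiff_dd (f : EV → ℝ) (hf : ContDiff ℝ (⊤ : ℕ∞) f) (v : EV) :
    ContDiff ℝ (⊤ : ℕ∞) (fun p => dd f p v) := by
  have h1 : ContDiff ℝ (⊤ : ℕ∞) (fderiv ℝ f) := hf.fderiv_right (by simp)
  exact (ContinuousLinearMap.apply ℝ ℝ v).contDiff.comp h1

lemma dd_comm (f : EV → ℝ) (hf : ContDiff ℝ (⊤ : ℕ∞) f) (p v w : EV) :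
    dd (fun y => dd f y v) p w = dd (fun y => dd f y w) p v := by
  have h1 : ContDiff ℝ (⊤ : ℕ∞) (fderiv ℝ f) := hf.fderiv_right (by simp)
  have hs := (hf.contDiffAt (x := p)).isSymmSndFDerivAt (by rw [minSmoothness_of_isRCLikeNormedField]; exact WithTop.coe_le_coe.mpr (le_top : (2 : ℕ∞) ≤ ⊤))
  have e : ∀ v w : EV, dd (fun y => dd f y v) p w = fderiv ℝ (fderiv ℝ f) p w v := by
    intro v w
    have h2 : HasFDerivAt (fun y => dd f y v)
        ((ContinuousLinearMap.apply ℝ ℝ v).comp (fderiv ℝ (fderiv ℝ f) p)) p :=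
      ((ContinuousLinearMap.apply ℝ ℝ v).hasFDerivAt).comp p
        (((h1.differentiable (by simp)) p).hasFDerivAt)
    rw [dd, h2.fderiv]; rfl
  rw [e v w, e w v, hs w v]

lemma dd_add {f g : EV → ℝ} (hf : Differentiable ℝ f) (hg : Differentiable ℝ g) (p v : EV) :
    dd (fun y => f y + g y) p v = dd f p v + dd g p v := by
  rw [dd, fderiv_fun_add (hf p) (hg p)]; rfl

lemma dd_sub {f g : EV → ℝ} (hf : Differentiable ℝ f) (hg : Differentiable ℝ g) (p v : EV) :
    dd (fun y => f y - g y) p v = dd f p v - dd g p v := by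
  rw [dd, fderiv_fun_sub (hf p) (hg p)]; rfl

lemma dd_neg {f : EV → ℝ} (p v : EV) :
    dd (fun y => -(f y)) p v = -(dd f p v) := by
  rw [dd, fderiv_fun_neg]; rfl

lemma dd_mul {f g : EV → ℝ} (hf : Differentiable ℝ f) (hg : Differentiable ℝ g) (p v : EV) :
    dd (fun y => f y * g y) p v = f p * dd g p v + g p * dd f p v := by
  rw [dd, fderiv_fun_mul (hf p) (hg p)]
  simp [dd, smul_eq_mul]

def unc (f : ℝ → V → ℝ) : EV → ℝ := fun p => f p.1 p.2
def Gd (f : ℝ → V → ℝ) (j : Fin 3) : EV → ℝ := fun p => dd (unc f) p (0, e3 j)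
def Uc (u : ℝ → V → V) (k : Fin 3) : EV → ℝ := fun p => u p.1 p.2 k
def bigB (q θ : ℝ → V → ℝ) (k : Fin 3) : EV → ℝ :=
  fun p => cross3 (fun j => Gd q j p) (fun j => Gd θ j p) k
def ubB (u : ℝ → V → V) (q θ : ℝ → V → ℝ) (k : Fin 3) : EV → ℝ :=
  fun p => cross3 (fun j => Uc u j p) (fun j => bigB q θ j p) k

/-- If `q` and `θ` are materially conserved by a divergence-free
smooth velocity `u`, then `B = ∇q × ∇θ` satisfies `∂ₜB − curl(u × B) = 0`. -/
theorem stmt0 (u : ℝ → V → V) (q θ : ℝ → V → ℝ)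
    (hu : ContDiff ℝ (⊤ : ℕ∞) (fun p : ℝ × V => u p.1 p.2))
    (hq : ContDiff ℝ (⊤ : ℕ∞) (fun p : ℝ × V => q p.1 p.2))
    (hθ : ContDiff ℝ (⊤ : ℕ∞) (fun p : ℝ × V => θ p.1 p.2))
    (hdiv : ∀ t x, div3 (u t) x = 0)
    (hadvq : ∀ t x, tder q t x + dot3 (u t x) (grad3 (q t) x) = 0)
    (hadvθ : ∀ t x, tder θ t x + dot3 (u t x) (grad3 (θ t) x) = 0)
    (B : ℝ → V → V)
    (hB : ∀ t x, B t x = cross3 (grad3 (q t) x) (grad3 (θ t) x)) :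
    ∀ t x, tderV B t x - curl3 (fun y => cross3 (u t y) (B t y)) x = 0 := by
  intro t x
  -- smoothness of the basic bricks
  have hFq : ContDiff ℝ (⊤ : ℕ∞) (unc q) := hq
  have hFθ : ContDiff ℝ (⊤ : ℕ∞) (unc θ) := hθ
  have hUc : ∀ k, ContDiff ℝ (⊤ : ℕ∞) (Uc u k) := fun k =>
    (ContinuousLinearMap.proj (R := ℝ) (φ := fun _ : Fin 3 => ℝ) k).contDiff.comp hu
  have hGq : ∀ j, ContDiff ℝ (⊤ : ℕ∞) (Gd q j) := fun j => contDiff_dd _ hFq _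
  have hGθ : ∀ j, ContDiff ℝ (⊤ : ℕ∞) (Gd θ j) := fun j => contDiff_dd _ hFθ _
  have hdq : ∀ j, Differentiable ℝ (Gd q j) := fun j => (hGq j).differentiable (by simp)
  have hdθ : ∀ j, Differentiable ℝ (Gd θ j) := fun j => (hGθ j).differentiable (by simp)
  have hdU : ∀ k, Differentiable ℝ (Uc u k) := fun k => (hUc k).differentiable (by simp)
  -- bigB as explicit functions
  have vB0 : bigB q θ 0 = fun p => Gd q 1 p * Gd θ 2 p - Gd q 2 p * Gd θ 1 p := by
    funext p; simp [bigB, cross3]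
  have vB1 : bigB q θ 1 = fun p => Gd q 2 p * Gd θ 0 p - Gd q 0 p * Gd θ 2 p := by
    funext p; simp [bigB, cross3]
  have vB2 : bigB q θ 2 = fun p => Gd q 0 p * Gd θ 1 p - Gd q 1 p * Gd θ 0 p := by
    funext p; simp [bigB, cross3]
  have hBB0 : ContDiff ℝ (⊤ : ℕ∞) (bigB q θ 0) := by
    rw [vB0]; exact ((hGq 1).mul (hGθ 2)).sub ((hGq 2).mul (hGθ 1))
  have hBB1 : ContDiff ℝ (⊤ : ℕ∞) (bigB q θ 1) := by
    rw [vB1]; exact ((hGq 2).mul (hGθ 0)).sub ((hGq 0).mul (hGθ 2))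
  have hBB2 : ContDiff ℝ (⊤ : ℕ∞) (bigB q θ 2) := by
    rw [vB2]; exact ((hGq 0).mul (hGθ 1)).sub ((hGq 1).mul (hGθ 0))
  have hdB0 : Differentiable ℝ (bigB q θ 0) := hBB0.differentiable (by simp)
  have hdB1 : Differentiable ℝ (bigB q θ 1) := hBB1.differentiable (by simp)
  have hdB2 : Differentiable ℝ (bigB q θ 2) := hBB2.differentiable (by simp)
  -- ubB as explicit functions
  have vU0 : ubB u q θ 0 = fun p => Uc u 1 p * bigB q θ 2 p - Uc u 2 p * bigB q θ 1 p := by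
    funext p; simp [ubB, cross3]
  have vU1 : ubB u q θ 1 = fun p => Uc u 2 p * bigB q θ 0 p - Uc u 0 p * bigB q θ 2 p := by
    funext p; simp [ubB, cross3]
  have vU2 : ubB u q θ 2 = fun p => Uc u 0 p * bigB q θ 1 p - Uc u 1 p * bigB q θ 0 p := by
    funext p; simp [ubB, cross3]
  have hUB0 : ContDiff ℝ (⊤ : ℕ∞) (ubB u q θ 0) := by
    rw [vU0]; exact ((hUc 1).mul hBB2).sub ((hUc 2).mul hBB1)
  have hUB1 : ContDiff ℝ (⊤ : ℕ∞) (ubB u q θ 1) := by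
    rw [vU1]; exact ((hUc 2).mul hBB0).sub ((hUc 0).mul hBB2)
  have hUB2 : ContDiff ℝ (⊤ : ℕ∞) (ubB u q θ 2) := by
    rw [vU2]; exact ((hUc 0).mul hBB1).sub ((hUc 1).mul hBB0)
  -- derivative expansions of bigB
  have EB0 : ∀ p v, dd (bigB q θ 0) p v =
      Gd q 1 p * dd (Gd θ 2) p v + Gd θ 2 p * dd (Gd q 1) p v
        - (Gd q 2 p * dd (Gd θ 1) p v + Gd θ 1 p * dd (Gd q 2) p v) := by
    intro p v
    rw [vB0, dd_sub ((hdq 1).fun_mul (hdθ 2)) ((hdq 2).fun_mul (hdθ 1)),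
      dd_mul (hdq 1) (hdθ 2), dd_mul (hdq 2) (hdθ 1)]
  have EB1 : ∀ p v, dd (bigB q θ 1) p v =
      Gd q 2 p * dd (Gd θ 0) p v + Gd θ 0 p * dd (Gd q 2) p v
        - (Gd q 0 p * dd (Gd θ 2) p v + Gd θ 2 p * dd (Gd q 0) p v) := by
    intro p v
    rw [vB1, dd_sub ((hdq 2).fun_mul (hdθ 0)) ((hdq 0).fun_mul (hdθ 2)),
      dd_mul (hdq 2) (hdθ 0), dd_mul (hdq 0) (hdθ 2)]
  have EB2 : ∀ p v, dd (bigB q θ 2) p v =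
      Gd q 0 p * dd (Gd θ 1) p v + Gd θ 1 p * dd (Gd q 0) p v
        - (Gd q 1 p * dd (Gd θ 0) p v + Gd θ 0 p * dd (Gd q 1) p v) := by
    intro p v
    rw [vB2, dd_sub ((hdq 0).fun_mul (hdθ 1)) ((hdq 1).fun_mul (hdθ 0)),
      dd_mul (hdq 0) (hdθ 1), dd_mul (hdq 1) (hdθ 0)]
  -- derivative expansions of ubB
  have EU0 : ∀ p v, dd (ubB u q θ 0) p v =
      Uc u 1 p * dd (bigB q θ 2) p v + bigB q θ 2 p * dd (Uc u 1) p v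
        - (Uc u 2 p * dd (bigB q θ 1) p v + bigB q θ 1 p * dd (Uc u 2) p v) := by
    intro p v
    rw [vU0, dd_sub ((hdU 1).fun_mul hdB2) ((hdU 2).fun_mul hdB1),
      dd_mul (hdU 1) hdB2, dd_mul (hdU 2) hdB1]
  have EU1 : ∀ p v, dd (ubB u q θ 1) p v =
      Uc u 2 p * dd (bigB q θ 0) p v + bigB q θ 0 p * dd (Uc u 2) p v
        - (Uc u 0 p * dd (bigB q θ 2) p v + bigB q θ 2 p * dd (Uc u 0) p v) := by
    intro p v
    rw [vU1, dd_sub ((hdU 2).fun_mul hdB0) ((hdU 0).fun_mul hdB2),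
      dd_mul (hdU 2) hdB0, dd_mul (hdU 0) hdB2]
  have EU2 : ∀ p v, dd (ubB u q θ 2) p v =
      Uc u 0 p * dd (bigB q θ 1) p v + bigB q θ 1 p * dd (Uc u 0) p v
        - (Uc u 1 p * dd (bigB q θ 0) p v + bigB q θ 0 p * dd (Uc u 1) p v) := by
    intro p v
    rw [vU2, dd_sub ((hdU 0).fun_mul hdB1) ((hdU 1).fun_mul hdB0),
      dd_mul (hdU 0) hdB1, dd_mul (hdU 1) hdB0]
  -- pointwise values of bigB
  have wB0 : ∀ p : EV, bigB q θ 0 p = Gd q 1 p * Gd θ 2 p - Gd q 2 p * Gd θ 1 p :=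
    fun p => congrFun vB0 p
  have wB1 : ∀ p : EV, bigB q θ 1 p = Gd q 2 p * Gd θ 0 p - Gd q 0 p * Gd θ 2 p :=
    fun p => congrFun vB1 p
  have wB2 : ∀ p : EV, bigB q θ 2 p = Gd q 0 p * Gd θ 1 p - Gd q 1 p * Gd θ 0 p :=
    fun p => congrFun vB2 p
  -- the advection identities as function identities
  have hq' : ∀ p : EV, dd (unc q) p ((1 : ℝ), (0 : V)) =
      -(Uc u 0 p * Gd q 0 p + Uc u 1 p * Gd q 1 p + Uc u 2 p * Gd q 2 p) := by
    intro p
    have h := hadvq p.1 p.2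
    have hd : deriv (fun s => q s p.2) p.1 = dd (unc q) (p.1, p.2) ((1 : ℝ), (0 : V)) :=
      deriv_slice (unc q) hFq p.1 p.2
    have hg : ∀ j, pd j (q p.1) p.2 = Gd q j (p.1, p.2) :=
      fun j => pd_slice (unc q) hFq p.1 p.2 j
    have hu' : ∀ k : Fin 3, u p.1 p.2 k = Uc u k p := fun _ => rfl
    rw [tder] at h
    rw [hd, dot3, Fin.sum_univ_three] at h
    simp only [grad3] at h
    rw [hg 0, hg 1, hg 2, hu' 0, hu' 1, hu' 2, Prod.mk.eta] at h
    linarith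
  have hθ' : ∀ p : EV, dd (unc θ) p ((1 : ℝ), (0 : V)) =
      -(Uc u 0 p * Gd θ 0 p + Uc u 1 p * Gd θ 1 p + Uc u 2 p * Gd θ 2 p) := by
    intro p
    have h := hadvθ p.1 p.2
    have hd : deriv (fun s => θ s p.2) p.1 = dd (unc θ) (p.1, p.2) ((1 : ℝ), (0 : V)) :=
      deriv_slice (unc θ) hFθ p.1 p.2
    have hg : ∀ j, pd j (θ p.1) p.2 = Gd θ j (p.1, p.2) :=
      fun j => pd_slice (unc θ) hFθ p.1 p.2 j
    have hu' : ∀ k : Fin 3, u p.1 p.2 k = Uc u k p := fun _ => rfl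
    rw [tder] at h
    rw [hd, dot3, Fin.sum_univ_three] at h
    simp only [grad3] at h
    rw [hg 0, hg 1, hg 2, hu' 0, hu' 1, hu' 2, Prod.mk.eta] at h
    linarith
  have hqfun : (fun p => dd (unc q) p ((1 : ℝ), (0 : V))) =
      fun p => -(Uc u 0 p * Gd q 0 p + Uc u 1 p * Gd q 1 p + Uc u 2 p * Gd q 2 p) :=
    funext hq'
  have hθfun : (fun p => dd (unc θ) p ((1 : ℝ), (0 : V))) =
      fun p => -(Uc u 0 p * Gd θ 0 p + Uc u 1 p * Gd θ 1 p + Uc u 2 p * Gd θ 2 p) :=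
    funext hθ'
  -- mixed second derivative identities
  have HQ : ∀ j : Fin 3, dd (Gd q j) (t, x) ((1 : ℝ), (0 : V)) =
      -(Uc u 0 (t, x) * dd (Gd q 0) (t, x) ((0 : ℝ), e3 j)
          + Gd q 0 (t, x) * dd (Uc u 0) (t, x) ((0 : ℝ), e3 j)
        + (Uc u 1 (t, x) * dd (Gd q 1) (t, x) ((0 : ℝ), e3 j)
          + Gd q 1 (t, x) * dd (Uc u 1) (t, x) ((0 : ℝ), e3 j))
        + (Uc u 2 (t, x) * dd (Gd q 2) (t, x) ((0 : ℝ), e3 j)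
          + Gd q 2 (t, x) * dd (Uc u 2) (t, x) ((0 : ℝ), e3 j))) := by
    intro j
    have h1 : dd (Gd q j) (t, x) ((1 : ℝ), (0 : V)) =
        dd (fun p => dd (unc q) p ((1 : ℝ), (0 : V))) (t, x) ((0 : ℝ), e3 j) :=
      dd_comm (unc q) hFq (t, x) (0, e3 j) ((1 : ℝ), (0 : V))
    rw [h1, hqfun, dd_neg,
      dd_add (((hdU 0).fun_mul (hdq 0)).fun_add ((hdU 1).fun_mul (hdq 1))) ((hdU 2).fun_mul (hdq 2)),
      dd_add ((hdU 0).fun_mul (hdq 0)) ((hdU 1).fun_mul (hdq 1)),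
      dd_mul (hdU 0) (hdq 0), dd_mul (hdU 1) (hdq 1), dd_mul (hdU 2) (hdq 2)]
  have HT : ∀ j : Fin 3, dd (Gd θ j) (t, x) ((1 : ℝ), (0 : V)) =
      -(Uc u 0 (t, x) * dd (Gd θ 0) (t, x) ((0 : ℝ), e3 j)
          + Gd θ 0 (t, x) * dd (Uc u 0) (t, x) ((0 : ℝ), e3 j)
        + (Uc u 1 (t, x) * dd (Gd θ 1) (t, x) ((0 : ℝ), e3 j)
          + Gd θ 1 (t, x) * dd (Uc u 1) (t, x) ((0 : ℝ), e3 j))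
        + (Uc u 2 (t, x) * dd (Gd θ 2) (t, x) ((0 : ℝ), e3 j)
          + Gd θ 2 (t, x) * dd (Uc u 2) (t, x) ((0 : ℝ), e3 j))) := by
    intro j
    have h1 : dd (Gd θ j) (t, x) ((1 : ℝ), (0 : V)) =
        dd (fun p => dd (unc θ) p ((1 : ℝ), (0 : V))) (t, x) ((0 : ℝ), e3 j) :=
      dd_comm (unc θ) hFθ (t, x) (0, e3 j) ((1 : ℝ), (0 : V))
    rw [h1, hθfun, dd_neg,
      dd_add (((hdU 0).fun_mul (hdθ 0)).fun_add ((hdU 1).fun_mul (hdθ 1))) ((hdU 2).fun_mul (hdθ 2)),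
      dd_add ((hdU 0).fun_mul (hdθ 0)) ((hdU 1).fun_mul (hdθ 1)),
      dd_mul (hdU 0) (hdθ 0), dd_mul (hdU 1) (hdθ 1), dd_mul (hdU 2) (hdθ 2)]
  -- symmetry normalizers
  have s10 : ∀ p, dd (Gd q 1) p ((0 : ℝ), e3 0) = dd (Gd q 0) p ((0 : ℝ), e3 1) :=
    fun p => dd_comm (unc q) hFq p (0, e3 1) (0, e3 0)
  have s20 : ∀ p, dd (Gd q 2) p ((0 : ℝ), e3 0) = dd (Gd q 0) p ((0 : ℝ), e3 2) :=
    fun p => dd_comm (unc q) hFq p (0, e3 2) (0, e3 0)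
  have s21 : ∀ p, dd (Gd q 2) p ((0 : ℝ), e3 1) = dd (Gd q 1) p ((0 : ℝ), e3 2) :=
    fun p => dd_comm (unc q) hFq p (0, e3 2) (0, e3 1)
  have r10 : ∀ p, dd (Gd θ 1) p ((0 : ℝ), e3 0) = dd (Gd θ 0) p ((0 : ℝ), e3 1) :=
    fun p => dd_comm (unc θ) hFθ p (0, e3 1) (0, e3 0)
  have r20 : ∀ p, dd (Gd θ 2) p ((0 : ℝ), e3 0) = dd (Gd θ 0) p ((0 : ℝ), e3 2) :=
    fun p => dd_comm (unc θ) hFθ p (0, e3 2) (0, e3 0)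
  have r21 : ∀ p, dd (Gd θ 2) p ((0 : ℝ), e3 1) = dd (Gd θ 1) p ((0 : ℝ), e3 2) :=
    fun p => dd_comm (unc θ) hFθ p (0, e3 2) (0, e3 1)
  have HQ0 := HQ 0; have HQ1 := HQ 1; have HQ2 := HQ 2
  have HT0 := HT 0; have HT1 := HT 1; have HT2 := HT 2
  simp only [s10, s20, s21, r10, r20, r21] at HQ0 HQ1 HQ2 HT0 HT1 HT2
  -- rewriting B and the cross products
  have hBpt : ∀ (s : ℝ) (y : V) (k : Fin 3), B s y k = bigB q θ k (s, y) := by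
    intro s y k
    rw [hB]
    have h1 : grad3 (q s) y = fun j => Gd q j (s, y) := by
      funext j; exact pd_slice (unc q) hFq s y j
    have h2 : grad3 (θ s) y = fun j => Gd θ j (s, y) := by
      funext j; exact pd_slice (unc θ) hFθ s y j
    rw [h1, h2]; rfl
  have hcr : ∀ (s : ℝ) (y : V) (k : Fin 3),
      cross3 (u s y) (B s y) k = ubB u q θ k (s, y) := by
    intro s y k
    rw [show B s y = fun k' => bigB q θ k' (s, y) from funext (hBpt s y)]
    rfl
  have hPD : ∀ (j k : Fin 3), pd j (fun y => ubB u q θ k (t, y)) x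
      = dd (ubB u q θ k) (t, x) ((0 : ℝ), e3 j) := by
    intro j k
    fin_cases k
    · exact pd_slice _ hUB0 t x j
    · exact pd_slice _ hUB1 t x j
    · exact pd_slice _ hUB2 t x j
  have hds : ∀ k : Fin 3, deriv (fun s => bigB q θ k (s, x)) t
      = dd (bigB q θ k) (t, x) ((1 : ℝ), (0 : V)) := by
    intro k
    fin_cases k
    · exact deriv_slice _ hBB0 t x
    · exact deriv_slice _ hBB1 t x
    · exact deriv_slice _ hBB2 t x
  have KEY : ∀ k : Fin 3, tderV B t x k - curl3 (fun y => cross3 (u t y) (B t y)) x k = 0 := by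
    have h0 : tderV B t x 0 - curl3 (fun y => cross3 (u t y) (B t y)) x 0 = 0 := by
      simp only [tderV, curl3, Matrix.cons_val_zero, Matrix.cons_val_one, Matrix.head_cons,
        Matrix.cons_val_two, Matrix.tail_cons]
      simp only [hcr, hBpt, hPD, hds]
      simp only [EU0, EU1, EU2, EB0, EB1, EB2, wB0, wB1, wB2]
      simp only [s10, s20, s21, r10, r20, r21]
      linear_combination (Gd θ 2 (t, x)) * HQ1 - (Gd θ 1 (t, x)) * HQ2
        - (Gd q 2 (t, x)) * HT1 + (Gd q 1 (t, x)) * HT2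
    have h1 : tderV B t x 1 - curl3 (fun y => cross3 (u t y) (B t y)) x 1 = 0 := by
      simp only [tderV, curl3, Matrix.cons_val_zero, Matrix.cons_val_one, Matrix.head_cons,
        Matrix.cons_val_two, Matrix.tail_cons]
      simp only [hcr, hBpt, hPD, hds]
      simp only [EU0, EU1, EU2, EB0, EB1, EB2, wB0, wB1, wB2]
      simp only [s10, s20, s21, r10, r20, r21]
      linear_combination -(Gd θ 2 (t, x)) * HQ0 + (Gd θ 0 (t, x)) * HQ2
        + (Gd q 2 (t, x)) * HT0 - (Gd q 0 (t, x)) * HT2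
    have h2 : tderV B t x 2 - curl3 (fun y => cross3 (u t y) (B t y)) x 2 = 0 := by
      simp only [tderV, curl3, Matrix.cons_val_zero, Matrix.cons_val_one, Matrix.head_cons,
        Matrix.cons_val_two, Matrix.tail_cons]
      simp only [hcr, hBpt, hPD, hds]
      simp only [EU0, EU1, EU2, EB0, EB1, EB2, wB0, wB1, wB2]
      simp only [s10, s20, s21, r10, r20, r21]
      linear_combination (Gd θ 1 (t, x)) * HQ0 - (Gd θ 0 (t, x)) * HQ1
        - (Gd q 1 (t, x)) * HT0 + (Gd q 0 (t, x)) * HT1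
    intro k
    fin_cases k
    · exact h0
    · exact h1
    · exact h2
  funext i
  simp only [Pi.sub_apply, Pi.zero_apply]
  exact KEY i
end
end

section
/- Let ω be a smooth vector field satisfying the compressible vorticity equation ∂ₜω − curl(u×ω) = μρ⁻¹Δω + ∇(ρ⁻¹) × (μΔu − ∇(ϖ + ½|u|²)), with ρ satisfying ∂ₜρ + div(ρu) = 0, ρ > 0. Then q = ω·∇ρ satisfies ∂ₜq + div(qu) + div( ω ρ div u − μ Δu × ∇(ln ρ) ) = 0. -/
noncomputable section

lemma two_le_inf : (2 : WithTop ℕ∞) ≤ ((⊤ : ℕ∞) : WithTop ℕ∞) := by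
  have : ((2:ℕ∞) : WithTop ℕ∞) ≤ ((⊤:ℕ∞) : WithTop ℕ∞) := by exact_mod_cast le_top
  simpa using this

abbrev Sm (f : V → ℝ) : Prop := ContDiff ℝ ((⊤ : ℕ∞) : WithTop ℕ∞) f

lemma Sm.dAt {f : V → ℝ} (hf : Sm f) (x : V) : DifferentiableAt ℝ f x :=
  (hf.differentiable (by norm_num)).differentiableAt

lemma Sm.pd' {f : V → ℝ} (hf : Sm f) (i : Fin 3) : Sm (pd i f) :=
  (hf.fderiv_right (by norm_num)).clm_apply contDiff_const

lemma pd_congr {f g : V → ℝ} (h : ∀ y, f y = g y) (i : Fin 3) (x : V) : pd i f x = pd i g x := by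
  rw [show f = g from funext h]

lemma pd_add {f g : V → ℝ} {x : V} (hf : DifferentiableAt ℝ f x) (hg : DifferentiableAt ℝ g x) (i : Fin 3) :
    pd i (fun y => f y + g y) x = pd i f x + pd i g x := by
  simp [pd, fderiv_fun_add hf hg]

lemma pd_sub {f g : V → ℝ} {x : V} (hf : DifferentiableAt ℝ f x) (hg : DifferentiableAt ℝ g x) (i : Fin 3) :
    pd i (fun y => f y - g y) x = pd i f x - pd i g x := by
  simp [pd, fderiv_fun_sub hf hg]

lemma pd_mul {f g : V → ℝ} {x : V} (hf : DifferentiableAt ℝ f x) (hg : DifferentiableAt ℝ g x) (i : Fin 3) :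
    pd i (fun y => f y * g y) x = pd i f x * g x + f x * pd i g x := by
  simp [pd, fderiv_fun_mul hf hg]; ring

lemma pd_cmul {f : V → ℝ} {x : V} (hf : DifferentiableAt ℝ f x) (c : ℝ) (i : Fin 3) :
    pd i (fun y => c * f y) x = c * pd i f x := by
  simp [pd, fderiv_const_mul hf c]

lemma pd_neg {f : V → ℝ} (i : Fin 3) (x : V) : pd i (fun y => -(f y)) x = -pd i f x := by
  simp [pd, fderiv_neg]

lemma pd_inv {f : V → ℝ} {x : V} (hf : DifferentiableAt ℝ f x) (hx : f x ≠ 0) (i : Fin 3) :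
    pd i (fun y => (f y)⁻¹) x = -((f x)^2)⁻¹ * pd i f x := by
  have h := (hasFDerivAt_inv hx).comp x hf.hasFDerivAt
  have h2 : fderiv ℝ (fun y => (f y)⁻¹) x
      = (ContinuousLinearMap.smulRight (1 : ℝ →L[ℝ] ℝ) (-(f x ^ 2)⁻¹)).comp (fderiv ℝ f x) :=
    h.fderiv
  rw [pd, h2]
  simp [pd, smul_eq_mul]; ring

lemma pd_log {f : V → ℝ} {x : V} (hf : DifferentiableAt ℝ f x) (hx : f x ≠ 0) (i : Fin 3) :
    pd i (fun y => Real.log (f y)) x = (f x)⁻¹ * pd i f x := by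
  have h := (hf.hasFDerivAt.log hx)
  have h2 : fderiv ℝ (fun y => Real.log (f y)) x = (f x)⁻¹ • fderiv ℝ f x := h.fderiv
  rw [pd, h2]
  simp [pd, smul_eq_mul]

lemma pd_comm {f : V → ℝ} (hf : Sm f) (i j : Fin 3) (x : V) :
    pd i (pd j f) x = pd j (pd i f) x := by
  have hd : DifferentiableAt ℝ (fderiv ℝ f) x :=
    ((hf.fderiv_right (m := 1) two_le_inf).differentiable one_ne_zero).differentiableAt
  have h1 : ∀ k l, pd k (pd l f) x = fderiv ℝ (fderiv ℝ f) x (e3 k) (e3 l) := by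
    intro k l
    have : pd l f = fun y => fderiv ℝ f y (e3 l) := rfl
    rw [pd, this, fderiv_clm_apply hd (differentiableAt_const _)]
    simp
  rw [h1, h1]
  exact (hf.contDiffAt.isSymmSndFDerivAt (by simpa [minSmoothness_of_isRCLikeNormedField] using two_le_inf)) _ _

abbrev SmJ (J : ℝ × V → ℝ) : Prop := ContDiff ℝ ((⊤ : ℕ∞) : WithTop ℕ∞) J

lemma SmJ.slice {J : ℝ × V → ℝ} (hJ : SmJ J) (t : ℝ) : Sm (fun y => J (t, y)) :=
  hJ.comp (contDiff_const.prodMk contDiff_id)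

lemma jd_space {J : ℝ × V → ℝ} (hJ : SmJ J) (t : ℝ) (x : V) (i : Fin 3) :
    pd i (fun y => J (t, y)) x = fderiv ℝ J (t, x) (0, e3 i) := by
  have h1 : HasFDerivAt (fun y : V => (t, y))
      ((0 : V →L[ℝ] ℝ).prod (ContinuousLinearMap.id ℝ V)) x :=
    HasFDerivAt.prodMk (hasFDerivAt_const t x) (hasFDerivAt_id x)
  have h2 := ((hJ.differentiable (by norm_num)).differentiableAt).hasFDerivAt.comp x h1
  have h3 : fderiv ℝ (fun y => J (t, y)) x
      = (fderiv ℝ J (t, x)).comp ((0 : V →L[ℝ] ℝ).prod (ContinuousLinearMap.id ℝ V)) := h2.fderiv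
  rw [pd, h3]
  rfl

lemma jd_time {J : ℝ × V → ℝ} (hJ : SmJ J) (t : ℝ) (x : V) :
    HasDerivAt (fun s => J (s, x)) (fderiv ℝ J (t, x) (1, 0)) t := by
  have h1 : HasFDerivAt (fun s : ℝ => (s, x))
      ((ContinuousLinearMap.id ℝ ℝ).prod (0 : ℝ →L[ℝ] V)) t :=
    HasFDerivAt.prodMk (hasFDerivAt_id t) (hasFDerivAt_const x t)
  have h2 := ((hJ.differentiable (by norm_num)).differentiableAt).hasFDerivAt.comp t h1
  have h3 := h2.hasDerivAt
  exact h3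

lemma smJ_fd {J : ℝ × V → ℝ} (hJ : SmJ J) (v : ℝ × V) : SmJ (fun p => fderiv ℝ J p v) :=
  (hJ.fderiv_right (by norm_num)).clm_apply contDiff_const

lemma fd_apply_comm {J : ℝ × V → ℝ} (hJ : SmJ J) (p v w : ℝ × V) :
    fderiv ℝ (fun q => fderiv ℝ J q v) p w = fderiv ℝ (fun q => fderiv ℝ J q w) p v := by
  have hd : DifferentiableAt ℝ (fderiv ℝ J) p :=
    ((hJ.fderiv_right (m := 1) two_le_inf).differentiable one_ne_zero).differentiableAt
  have h1 : ∀ v : ℝ × V, fderiv ℝ (fun q => fderiv ℝ J q v) p = (fderiv ℝ (fderiv ℝ J) p).flip v := by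
    intro v; rw [fderiv_clm_apply hd (differentiableAt_const _)]; simp
  rw [h1, h1]
  simp only [ContinuousLinearMap.flip_apply]
  exact (hJ.contDiffAt.isSymmSndFDerivAt (by simpa [minSmoothness_of_isRCLikeNormedField] using two_le_inf)) w v

lemma hasDerivAt_pd_slice {J : ℝ × V → ℝ} (hJ : SmJ J) (t : ℝ) (x : V) (i : Fin 3) :
    HasDerivAt (fun s => pd i (fun y => J (s, y)) x)
      (pd i (fun y => deriv (fun s => J (s, y)) t) x) t := by
  have hfun : (fun s => pd i (fun y => J (s, y)) x)
      = fun s => (fun p => fderiv ℝ J p (0, e3 i)) (s, x) := by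
    funext s; exact jd_space hJ s x i
  have h2 := jd_time (smJ_fd hJ (0, e3 i)) t x
  rw [hfun]
  convert h2 using 1
  have hfun2 : (fun y => deriv (fun s => J (s, y)) t)
      = fun y => (fun p => fderiv ℝ J p (1, 0)) (t, y) := by
    funext y; exact ((jd_time hJ t y).deriv)
  rw [hfun2, jd_space (smJ_fd hJ (1, 0)) t x i]
  exact fd_apply_comm hJ (t, x) (1, 0) (0, e3 i)

lemma div3_congr {F G : V → V} (h : ∀ y, F y = G y) (x : V) : div3 F x = div3 G x := by
  rw [show F = G from funext h]

lemma div3_smul {f : V → ℝ} {F : V → V} (hf : Sm f) (hF : ∀ i, Sm fun y => F y i) (x : V) :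
    div3 (fun y => f y • F y) x = dot3 (grad3 f x) (F x) + f x * div3 F x := by
  simp only [div3, dot3, grad3, Fin.sum_univ_three, Pi.smul_apply, smul_eq_mul]
  rw [pd_mul (hf.dAt x) ((hF 0).dAt x), pd_mul (hf.dAt x) ((hF 1).dAt x),
    pd_mul (hf.dAt x) ((hF 2).dAt x)]
  ring

lemma div3_sub {F G : V → V} {x : V} (hF : ∀ i, DifferentiableAt ℝ (fun y => F y i) x)
    (hG : ∀ i, DifferentiableAt ℝ (fun y => G y i) x) :
    div3 (fun y => F y - G y) x = div3 F x - div3 G x := by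
  simp only [div3, Fin.sum_univ_three, Pi.sub_apply]
  rw [pd_sub (hF 0) (hG 0), pd_sub (hF 1) (hG 1), pd_sub (hF 2) (hG 2)]
  ring

lemma div3_const_smul {F : V → V} {x : V} (hF : ∀ i, DifferentiableAt ℝ (fun y => F y i) x) (c : ℝ) :
    div3 (fun y => c • F y) x = c * div3 F x := by
  simp only [div3, Fin.sum_univ_three, Pi.smul_apply, smul_eq_mul]
  rw [pd_cmul (hF 0) c, pd_cmul (hF 1) c, pd_cmul (hF 2) c]
  ring

lemma div3_cross {F G : V → V} (hF : ∀ i, Sm fun y => F y i) (hG : ∀ i, Sm fun y => G y i) (x : V) :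
    div3 (fun y => cross3 (F y) (G y)) x = dot3 (G x) (curl3 F x) - dot3 (F x) (curl3 G x) := by
  simp only [div3, dot3, curl3, cross3, Fin.sum_univ_three, Matrix.cons_val_zero,
    Matrix.cons_val_one, Matrix.head_cons, Matrix.cons_val_two, Matrix.tail_cons]
  rw [pd_sub (((hF 1).dAt x).fun_mul ((hG 2).dAt x)) (((hF 2).dAt x).fun_mul ((hG 1).dAt x)),
    pd_sub (((hF 2).dAt x).fun_mul ((hG 0).dAt x)) (((hF 0).dAt x).fun_mul ((hG 2).dAt x)),
    pd_sub (((hF 0).dAt x).fun_mul ((hG 1).dAt x)) (((hF 1).dAt x).fun_mul ((hG 0).dAt x)),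
    pd_mul ((hF 1).dAt x) ((hG 2).dAt x), pd_mul ((hF 2).dAt x) ((hG 1).dAt x),
    pd_mul ((hF 2).dAt x) ((hG 0).dAt x), pd_mul ((hF 0).dAt x) ((hG 2).dAt x),
    pd_mul ((hF 0).dAt x) ((hG 1).dAt x), pd_mul ((hF 1).dAt x) ((hG 0).dAt x)]
  ring

lemma dot3_curl3_grad3 {f : V → ℝ} (hf : Sm f) (v : V) (x : V) :
    dot3 v (curl3 (fun y => grad3 f y) x) = 0 := by
  simp only [dot3, curl3, grad3, Fin.sum_univ_three, Matrix.cons_val_zero, Matrix.cons_val_one,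
    Matrix.head_cons, Matrix.cons_val_two, Matrix.tail_cons]
  rw [pd_comm hf 1 2, pd_comm hf 2 0, pd_comm hf 0 1]
  ring

lemma div3_curl3 {F : V → V} (hF : ∀ i, Sm fun y => F y i) (x : V) :
    div3 (fun y => curl3 F y) x = 0 := by
  simp only [div3, Fin.sum_univ_three, curl3, Matrix.cons_val_zero, Matrix.cons_val_one,
    Matrix.head_cons, Matrix.cons_val_two, Matrix.tail_cons]
  rw [pd_sub (((hF 2).pd' 1).dAt x) (((hF 1).pd' 2).dAt x),
    pd_sub (((hF 0).pd' 2).dAt x) (((hF 2).pd' 0).dAt x),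
    pd_sub (((hF 1).pd' 0).dAt x) (((hF 0).pd' 1).dAt x),
    pd_comm (hF 2) 0 1, pd_comm (hF 1) 0 2, pd_comm (hF 0) 1 2]
  ring

lemma pd_comm3 {g : V → ℝ} (hg : Sm g) (i j : Fin 3) (x : V) :
    pd j (pd j (pd i g)) x = pd i (pd j (pd j g)) x := by
  rw [pd_congr (fun y => pd_comm hg j i y) j x, pd_comm (hg.pd' j) j i x]

lemma lap3_sub {a b : V → ℝ} (ha : Sm a) (hb : Sm b) (x : V) :
    lap3 (fun y => a y - b y) x = lap3 a x - lap3 b x := by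
  simp only [lap3, Fin.sum_univ_three]
  have h : ∀ j : Fin 3, pd j (fun y => pd j (fun z => a z - b z) y) x
      = pd j (pd j a) x - pd j (pd j b) x := by
    intro j
    rw [pd_congr (fun z => pd_sub (ha.dAt z) (hb.dAt z) j) j x,
      pd_sub ((ha.pd' j).dAt x) ((hb.pd' j).dAt x) j]
  rw [h 0, h 1, h 2]; ring

lemma pd_lap3 {g : V → ℝ} (hg : Sm g) (i : Fin 3) (x : V) :
    pd i (fun y => lap3 g y) x = lap3 (pd i g) x := by
  have hptw : ∀ y, lap3 g y = pd 0 (pd 0 g) y + pd 1 (pd 1 g) y + pd 2 (pd 2 g) y := by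
    intro y; simp only [lap3, Fin.sum_univ_three]
  rw [pd_congr hptw i x,
    pd_add (Sm.dAt (((hg.pd' 0).pd' 0).add ((hg.pd' 1).pd' 1)) x) (((hg.pd' 2).pd' 2).dAt x),
    pd_add (((hg.pd' 0).pd' 0).dAt x) (((hg.pd' 1).pd' 1).dAt x)]
  simp only [lap3, Fin.sum_univ_three]
  rw [pd_comm3 hg i 0 x, pd_comm3 hg i 1 x, pd_comm3 hg i 2 x]

lemma dot3_curl3_vlap3 {F : V → V} (hF : ∀ i, Sm fun y => F y i) (x v : V) :
    dot3 v (curl3 (fun y => vlap3 F y) x) = dot3 v (vlap3 (fun y => curl3 F y) x) := by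
  simp only [dot3, curl3, vlap3, Fin.sum_univ_three, Matrix.cons_val_zero, Matrix.cons_val_one,
    Matrix.head_cons, Matrix.cons_val_two, Matrix.tail_cons]
  rw [pd_lap3 (hF 2) 1 x, pd_lap3 (hF 1) 2 x, pd_lap3 (hF 0) 2 x, pd_lap3 (hF 2) 0 x,
    pd_lap3 (hF 1) 0 x, pd_lap3 (hF 0) 1 x,
    lap3_sub ((hF 2).pd' 1) ((hF 1).pd' 2) x, lap3_sub ((hF 0).pd' 2) ((hF 2).pd' 0) x,
    lap3_sub ((hF 1).pd' 0) ((hF 0).pd' 1) x]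

lemma dot3_comm (a b : V) : dot3 a b = dot3 b a := by
  simp only [dot3, Fin.sum_univ_three]; ring

lemma cross3_cross3 (a b c : V) : cross3 (cross3 a b) c = dot3 c a • b - dot3 b c • a := by
  funext i
  fin_cases i <;>
    simp [cross3, dot3, Fin.sum_univ_three, Pi.smul_apply, smul_eq_mul, Pi.sub_apply] <;> ring

lemma dot3_cross3_parallel {b z a : V} {c : ℝ} (h : ∀ i, b i = c * a i) :
    dot3 (cross3 b z) a = 0 := by
  simp only [dot3, cross3, Fin.sum_univ_three, Matrix.cons_val_zero, Matrix.cons_val_one,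
    Matrix.head_cons, Matrix.cons_val_two, Matrix.tail_cons]
  rw [h 0, h 1, h 2]; ring

/-- compressible Navier–Stokes, 1st projection `q = ω·∇ρ`:
given the compressible vorticity equation and the continuity equation,
`∂ₜq + div(qu) + div(ω ρ div u − μ Δu × ∇(ln ρ)) = 0`. -/
theorem stmt10 (u ω : ℝ → V → V) (ρ ϖ : ℝ → V → ℝ) (μ : ℝ)
    (hu : ContDiff ℝ (⊤ : ℕ∞) (fun p : ℝ × V => u p.1 p.2))
    (hρ : ContDiff ℝ (⊤ : ℕ∞) (fun p : ℝ × V => ρ p.1 p.2))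
    (hϖ : ContDiff ℝ (⊤ : ℕ∞) (fun p : ℝ × V => ϖ p.1 p.2))
    (hρpos : ∀ t x, 0 < ρ t x)
    (hω : ∀ t x, ω t x = curl3 (u t) x)
    (hωeq : ∀ t x, tderV ω t x - curl3 (fun y => cross3 (u t y) (ω t y)) x =
      (μ * (ρ t x)⁻¹) • vlap3 (ω t) x +
      cross3 (grad3 (fun y => (ρ t y)⁻¹) x)
        (μ • vlap3 (u t) x -
          grad3 (fun y => ϖ t y + (1 / 2) * dot3 (u t y) (u t y)) x))
    (hcont : ∀ t x, tder ρ t x + div3 (fun y => ρ t y • u t y) x = 0)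
    (q : ℝ → V → ℝ) (hq : ∀ t x, q t x = dot3 (ω t x) (grad3 (ρ t) x)) :
    ∀ t x, tder q t x + div3 (fun y => q t y • u t y) x +
      div3 (fun y => (ρ t y * div3 (u t) y) • ω t y -
        μ • cross3 (vlap3 (u t) y) (grad3 (fun z => Real.log (ρ t z)) y)) x = 0 := by
  intro t x
  -- joint smoothness
  have hu' : ∀ k : Fin 3, SmJ (fun p : ℝ × V => u p.1 p.2 k) :=
    fun k => (contDiff_pi.1 (hu.of_le (by simp))) k
  have hρ' : SmJ (fun p : ℝ × V => ρ p.1 p.2) := hρ.of_le (by simp)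
  -- spatial smoothness at time t
  have hU : ∀ k : Fin 3, Sm (fun y => u t y k) := fun k => (hu' k).slice t
  have hR : Sm (ρ t) := hρ'.slice t
  have hRx : ρ t x ≠ 0 := (hρpos t x).ne'
  have hRy : ∀ y, ρ t y ≠ 0 := fun y => (hρpos t y).ne'
  have hW : ∀ i : Fin 3, Sm (fun y => curl3 (u t) y i) := by
    intro i
    fin_cases i
    · simpa [curl3] using ((hU 2).pd' 1).sub ((hU 1).pd' 2)
    · simpa [curl3] using ((hU 0).pd' 2).sub ((hU 2).pd' 0)
    · simpa [curl3] using ((hU 1).pd' 0).sub ((hU 0).pd' 1)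
  have hDivU : Sm (fun y => div3 (u t) y) := by
    have e : (fun y => div3 (u t) y) = fun y =>
        pd 0 (fun z => u t z 0) y + pd 1 (fun z => u t z 1) y + pd 2 (fun z => u t z 2) y := by
      funext y; simp [div3, Fin.sum_univ_three]
    rw [e]
    exact (((hU 0).pd' 0).add ((hU 1).pd' 1)).add ((hU 2).pd' 2)
  have hGradR : ∀ i : Fin 3, Sm (fun y => grad3 (ρ t) y i) := by
    intro i; simpa [grad3] using hR.pd' i
  have hdotGU : Sm (fun y => dot3 (grad3 (ρ t) y) (u t y)) := by
    have e : (fun y => dot3 (grad3 (ρ t) y) (u t y)) = fun y =>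
        pd 0 (ρ t) y * u t y 0 + pd 1 (ρ t) y * u t y 1 + pd 2 (ρ t) y * u t y 2 := by
      funext y; simp [dot3, grad3, Fin.sum_univ_three]
    rw [e]
    exact (((hR.pd' 0).mul (hU 0)).add ((hR.pd' 1).mul (hU 1))).add ((hR.pd' 2).mul (hU 2))
  have hRdivU : Sm (fun y => ρ t y * div3 (u t) y) := hR.mul hDivU
  have hQs : Sm (fun y => dot3 (curl3 (u t) y) (grad3 (ρ t) y)) := by
    have e : (fun y => dot3 (curl3 (u t) y) (grad3 (ρ t) y)) = fun y =>
        curl3 (u t) y 0 * pd 0 (ρ t) y + curl3 (u t) y 1 * pd 1 (ρ t) y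
          + curl3 (u t) y 2 * pd 2 (ρ t) y := by
      funext y; simp [dot3, grad3, Fin.sum_univ_three]
    rw [e]
    exact (((hW 0).mul (hR.pd' 0)).add ((hW 1).mul (hR.pd' 1))).add ((hW 2).mul (hR.pd' 2))
  have hVlapU : ∀ i : Fin 3, Sm (fun y => vlap3 (u t) y i) := by
    intro i
    have e : (fun y => vlap3 (u t) y i) = fun y =>
        pd 0 (pd 0 (fun z => u t z i)) y + pd 1 (pd 1 (fun z => u t z i)) y
          + pd 2 (pd 2 (fun z => u t z i)) y := by
      funext y; simp [vlap3, lap3, Fin.sum_univ_three]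
    rw [e]
    exact ((((hU i).pd' 0).pd' 0).add (((hU i).pd' 1).pd' 1)).add (((hU i).pd' 2).pd' 2)
  have hLogR : Sm (fun y => Real.log (ρ t y)) := hR.log hRy
  have hGradLog : ∀ i : Fin 3, Sm (fun y => grad3 (fun z => Real.log (ρ t z)) y i) := by
    intro i; simpa [grad3] using hLogR.pd' i
  have hCr : ∀ i : Fin 3,
      Sm (fun y => cross3 (vlap3 (u t) y) (grad3 (fun z => Real.log (ρ t z)) y) i) := by
    intro i
    fin_cases i
    · simpa [cross3] using ((hVlapU 1).mul (hGradLog 2)).sub ((hVlapU 2).mul (hGradLog 1))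
    · simpa [cross3] using ((hVlapU 2).mul (hGradLog 0)).sub ((hVlapU 0).mul (hGradLog 2))
    · simpa [cross3] using ((hVlapU 0).mul (hGradLog 1)).sub ((hVlapU 1).mul (hGradLog 0))
  have hXc : ∀ i : Fin 3, Sm (fun y => cross3 (u t y) (curl3 (u t) y) i) := by
    intro i
    fin_cases i
    · simpa [cross3] using ((hU 1).mul (hW 2)).sub ((hU 2).mul (hW 1))
    · simpa [cross3] using ((hU 2).mul (hW 0)).sub ((hU 0).mul (hW 2))
    · simpa [cross3] using ((hU 0).mul (hW 1)).sub ((hU 1).mul (hW 0))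
  -- time derivative of q, split
  have mix : ∀ (k i : Fin 3), HasDerivAt (fun s => pd i (fun y => u s y k) x)
      (pd i (fun y => deriv (fun s' => u s' y k) t) x) t :=
    fun k i => hasDerivAt_pd_slice (hu' k) t x i
  have hρmix : ∀ i : Fin 3, HasDerivAt (fun s => pd i (ρ s) x)
      (pd i (fun y => tder ρ t y) x) t := fun i => hasDerivAt_pd_slice hρ' t x i
  have hωd0 : HasDerivAt (fun s => ω s x 0) (tderV ω t x 0) t := by
    have e : (fun s => ω s x 0) = fun s => pd 1 (fun y => u s y 2) x - pd 2 (fun y => u s y 1) x := by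
      funext s; rw [hω]; simp [curl3]
    have hd : HasDerivAt (fun s => ω s x 0)
        (pd 1 (fun y => deriv (fun s' => u s' y 2) t) x
          - pd 2 (fun y => deriv (fun s' => u s' y 1) t) x) t := by
      rw [e]; exact (mix 2 1).sub (mix 1 2)
    have h2 : tderV ω t x 0 = _ := hd.deriv
    rw [h2]; exact hd
  have hωd1 : HasDerivAt (fun s => ω s x 1) (tderV ω t x 1) t := by
    have e : (fun s => ω s x 1) = fun s => pd 2 (fun y => u s y 0) x - pd 0 (fun y => u s y 2) x := by
      funext s; rw [hω]; simp [curl3]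
    have hd : HasDerivAt (fun s => ω s x 1)
        (pd 2 (fun y => deriv (fun s' => u s' y 0) t) x
          - pd 0 (fun y => deriv (fun s' => u s' y 2) t) x) t := by
      rw [e]; exact (mix 0 2).sub (mix 2 0)
    have h2 : tderV ω t x 1 = _ := hd.deriv
    rw [h2]; exact hd
  have hωd2 : HasDerivAt (fun s => ω s x 2) (tderV ω t x 2) t := by
    have e : (fun s => ω s x 2) = fun s => pd 0 (fun y => u s y 1) x - pd 1 (fun y => u s y 0) x := by
      funext s; rw [hω]; simp [curl3]
    have hd : HasDerivAt (fun s => ω s x 2)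
        (pd 0 (fun y => deriv (fun s' => u s' y 1) t) x
          - pd 1 (fun y => deriv (fun s' => u s' y 0) t) x) t := by
      rw [e]; exact (mix 1 0).sub (mix 0 1)
    have h2 : tderV ω t x 2 = _ := hd.deriv
    rw [h2]; exact hd
  have hqfun : (fun s => q s x) = fun s =>
      ω s x 0 * pd 0 (ρ s) x + ω s x 1 * pd 1 (ρ s) x + ω s x 2 * pd 2 (ρ s) x := by
    funext s; rw [hq]; simp [dot3, grad3, Fin.sum_univ_three]
  have hTq : tder q t x =
      (tderV ω t x 0 * pd 0 (ρ t) x + ω t x 0 * pd 0 (fun y => tder ρ t y) x)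
      + (tderV ω t x 1 * pd 1 (ρ t) x + ω t x 1 * pd 1 (fun y => tder ρ t y) x)
      + (tderV ω t x 2 * pd 2 (ρ t) x + ω t x 2 * pd 2 (fun y => tder ρ t y) x) := by
    have H := ((hωd0.mul (hρmix 0)).add (hωd1.mul (hρmix 1))).add (hωd2.mul (hρmix 2))
    show deriv (fun s => q s x) t = _
    rw [hqfun]
    exact H.deriv
  -- substitute the vorticity equation
  have hcomp : ∀ i : Fin 3, tderV ω t x i =
      curl3 (fun y => cross3 (u t y) (curl3 (u t) y)) x i
      + μ * (ρ t x)⁻¹ * vlap3 (fun y => curl3 (u t) y) x i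
      + cross3 (grad3 (fun y => (ρ t y)⁻¹) x)
          (μ • vlap3 (u t) x - grad3 (fun y => ϖ t y + 1 / 2 * dot3 (u t y) (u t y)) x) i := by
    intro i
    have h := congrFun (hωeq t x) i
    have e1 : (fun y => cross3 (u t y) (ω t y)) = fun y => cross3 (u t y) (curl3 (u t) y) := by
      funext y; rw [hω]
    have e2 : ω t = fun y => curl3 (u t) y := funext (hω t)
    rw [e1, e2] at h
    simp only [Pi.sub_apply, Pi.add_apply, Pi.smul_apply, smul_eq_mul] at h
    linarith
  -- substitute the continuity equation
  have hpdtρ : ∀ i : Fin 3, pd i (fun y => tder ρ t y) x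
      = -(pd i (fun y => dot3 (grad3 (ρ t) y) (u t y)) x
          + pd i (fun y => ρ t y * div3 (u t) y) x) := by
    intro i
    have hfun : ∀ y, tder ρ t y = -(dot3 (grad3 (ρ t) y) (u t y) + ρ t y * div3 (u t) y) := by
      intro y
      have h1 := hcont t y
      have h2 : div3 (fun z => ρ t z • u t z) y
          = dot3 (grad3 (ρ t) y) (u t y) + ρ t y * div3 (u t) y := div3_smul hR hU y
      linarith
    rw [pd_congr hfun i x, pd_neg, pd_add (Sm.dAt hdotGU x) (Sm.dAt hRdivU x)]
  rw [hcomp 0, hcomp 1, hcomp 2, hpdtρ 0, hpdtρ 1, hpdtρ 2, hω t x] at hTq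
  -- rewrite T2
  have hT2eq : div3 (fun y => q t y • u t y) x
      = div3 (fun y => dot3 (curl3 (u t) y) (grad3 (ρ t) y) • u t y) x := by
    refine div3_congr (fun y => ?_) x
    rw [hq, hω]
  -- the A1 chain
  have a1 : div3 (fun y => cross3 (cross3 (u t y) (curl3 (u t) y)) (grad3 (ρ t) y)) x
      = dot3 (grad3 (ρ t) x) (curl3 (fun y => cross3 (u t y) (curl3 (u t) y)) x)
        - dot3 (cross3 (u t x) (curl3 (u t) x)) (curl3 (fun y => grad3 (ρ t) y) x) :=
    div3_cross hXc hGradR x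
  have a2 : dot3 (cross3 (u t x) (curl3 (u t) x)) (curl3 (fun y => grad3 (ρ t) y) x) = 0 :=
    dot3_curl3_grad3 hR _ x
  have a3 : div3 (fun y => cross3 (cross3 (u t y) (curl3 (u t) y)) (grad3 (ρ t) y)) x
      = div3 (fun y => dot3 (grad3 (ρ t) y) (u t y) • curl3 (u t) y
          - dot3 (curl3 (u t) y) (grad3 (ρ t) y) • u t y) x :=
    div3_congr (fun y => cross3_cross3 _ _ _) x
  have a4 : div3 (fun y => dot3 (grad3 (ρ t) y) (u t y) • curl3 (u t) y
          - dot3 (curl3 (u t) y) (grad3 (ρ t) y) • u t y) x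
      = div3 (fun y => dot3 (grad3 (ρ t) y) (u t y) • curl3 (u t) y) x
        - div3 (fun y => dot3 (curl3 (u t) y) (grad3 (ρ t) y) • u t y) x :=
    div3_sub (fun i => Sm.dAt (hdotGU.mul (hW i)) x) (fun i => Sm.dAt (hQs.mul (hU i)) x)
  have a6 : div3 (fun y => curl3 (u t) y) x = 0 := div3_curl3 hU x
  have a5 : div3 (fun y => dot3 (grad3 (ρ t) y) (u t y) • curl3 (u t) y) x
      = dot3 (grad3 (fun y => dot3 (grad3 (ρ t) y) (u t y)) x) (curl3 (u t) x)
        + dot3 (grad3 (ρ t) x) (u t x) * div3 (fun y => curl3 (u t) y) x := div3_smul hdotGU hW x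
  have hA1full : dot3 (grad3 (ρ t) x) (curl3 (fun y => cross3 (u t y) (curl3 (u t) y)) x)
      = dot3 (grad3 (fun y => dot3 (grad3 (ρ t) y) (u t y)) x) (curl3 (u t) x)
        - div3 (fun y => dot3 (curl3 (u t) y) (grad3 (ρ t) y) • u t y) x := by
    rw [a6] at a5
    linarith [a1, a2, a3, a4, a5]
  -- the A3 term vanishes
  have hgradinv : ∀ i : Fin 3, grad3 (fun y => (ρ t y)⁻¹) x i
      = -((ρ t x)^2)⁻¹ * grad3 (ρ t) x i := by
    intro i
    simp only [grad3]
    exact pd_inv (Sm.dAt hR x) hRx i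
  have hA3 : dot3 (cross3 (grad3 (fun y => (ρ t y)⁻¹) x)
      (μ • vlap3 (u t) x - grad3 (fun y => ϖ t y + 1 / 2 * dot3 (u t y) (u t y)) x))
      (grad3 (ρ t) x) = 0 := dot3_cross3_parallel hgradinv
  -- the T3 chain
  have e1 : div3 (fun y => (ρ t y * div3 (u t) y) • ω t y -
        μ • cross3 (vlap3 (u t) y) (grad3 (fun z => Real.log (ρ t z)) y)) x
      = div3 (fun y => (ρ t y * div3 (u t) y) • curl3 (u t) y -
        μ • cross3 (vlap3 (u t) y) (grad3 (fun z => Real.log (ρ t z)) y)) x := by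
    refine div3_congr (fun y => ?_) x
    rw [hω]
  have e2 : div3 (fun y => (ρ t y * div3 (u t) y) • curl3 (u t) y -
        μ • cross3 (vlap3 (u t) y) (grad3 (fun z => Real.log (ρ t z)) y)) x
      = div3 (fun y => (ρ t y * div3 (u t) y) • curl3 (u t) y) x
        - div3 (fun y => μ • cross3 (vlap3 (u t) y) (grad3 (fun z => Real.log (ρ t z)) y)) x :=
    div3_sub (fun i => Sm.dAt (hRdivU.mul (hW i)) x)
      (fun i => Sm.dAt (contDiff_const.mul (hCr i)) x)
  have e3 : div3 (fun y => (ρ t y * div3 (u t) y) • curl3 (u t) y) x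
      = dot3 (grad3 (fun y => ρ t y * div3 (u t) y) x) (curl3 (u t) x)
        + (ρ t x * div3 (u t) x) * div3 (fun y => curl3 (u t) y) x := div3_smul hRdivU hW x
  have e4 : div3 (fun y => μ • cross3 (vlap3 (u t) y) (grad3 (fun z => Real.log (ρ t z)) y)) x
      = μ * div3 (fun y => cross3 (vlap3 (u t) y) (grad3 (fun z => Real.log (ρ t z)) y)) x :=
    div3_const_smul (fun i => Sm.dAt (hCr i) x) μ
  have e5 : div3 (fun y => cross3 (vlap3 (u t) y) (grad3 (fun z => Real.log (ρ t z)) y)) x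
      = dot3 (grad3 (fun z => Real.log (ρ t z)) x) (curl3 (fun y => vlap3 (u t) y) x)
        - dot3 (vlap3 (u t) x) (curl3 (fun y => grad3 (fun z => Real.log (ρ t z)) y) x) :=
    div3_cross hVlapU hGradLog x
  have e6 : dot3 (vlap3 (u t) x) (curl3 (fun y => grad3 (fun z => Real.log (ρ t z)) y) x) = 0 :=
    dot3_curl3_grad3 hLogR _ x
  have e7 : dot3 (grad3 (fun z => Real.log (ρ t z)) x) (curl3 (fun y => vlap3 (u t) y) x)
      = dot3 (grad3 (fun z => Real.log (ρ t z)) x) (vlap3 (fun y => curl3 (u t) y) x) :=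
    dot3_curl3_vlap3 hU x _
  have e8 : dot3 (grad3 (fun z => Real.log (ρ t z)) x) (vlap3 (fun y => curl3 (u t) y) x)
      = (ρ t x)⁻¹ * dot3 (grad3 (ρ t) x) (vlap3 (fun y => curl3 (u t) y) x) := by
    simp only [dot3, grad3, Fin.sum_univ_three]
    rw [pd_log (Sm.dAt hR x) hRx 0, pd_log (Sm.dAt hR x) hRx 1, pd_log (Sm.dAt hR x) hRx 2]
    ring
  have hT3full : div3 (fun y => (ρ t y * div3 (u t) y) • ω t y -
        μ • cross3 (vlap3 (u t) y) (grad3 (fun z => Real.log (ρ t z)) y)) x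
      = dot3 (grad3 (fun y => ρ t y * div3 (u t) y) x) (curl3 (u t) x)
        - μ * ((ρ t x)⁻¹ * dot3 (grad3 (ρ t) x) (vlap3 (fun y => curl3 (u t) y) x)) := by
    rw [e1, e2, e3, a6, e4, e5, e6, e7, e8]
    ring
  -- final assembly
  rw [hTq, hT2eq, hT3full]
  simp only [dot3, grad3, cross3, curl3, vlap3, lap3, Fin.sum_univ_three, Matrix.cons_val_zero,
    Matrix.cons_val_one, Matrix.head_cons, Matrix.cons_val_two, Matrix.tail_cons, Pi.smul_apply,
    Pi.sub_apply, Pi.add_apply, smul_eq_mul, Pi.neg_apply] at hA1full hA3 ⊢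
  linarith [hA1full, hA3]
end
end
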